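/- Both the traditional and the alternative algorithm compute the same value: for any A and digit list ds, ∑ over positions j of (A * ds[j]) * 10^j equals f A ds 0, where f A [] c = c and f A (d :: ds) c = ((A * d + c) % 10) + 10 * f A ds ((A * d + c) / 10). -/

import Mathlib

def f14 (A : ℕ) : List ℕ → ℕ → ℕ
  | [], c => c
  | d :: ds, c => (A * d + c) % 10 + 10 * f14 A ds ((A * d + c) / 10)

theorem Nat.ofDigits_eq_sum_range_getD {R : Type*} [CommSemiring R] (b : R) (ds : List ℕ) :
    Nat.ofDigits b ds = ∑ j ∈ Finset.range ds.length, (ds.getD j 0 : R) * b ^ j := by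
  induction ds with
  | nil => rfl
  | cons d ds ih =>
    rw [Nat.ofDigits, ih, List.length_cons, Finset.sum_range_succ', Finset.mul_sum]
    simp only [List.getD_cons_succ, List.getD_cons_zero, pow_succ, pow_zero, mul_one]
    rw [add_comm]
    congr 1
    exact Finset.sum_congr rfl fun j _ => by ring

/-- Each digit step writes `(A * d + c) % 10` and carries `(A * d + c) / 10`, which leaves
`A * d + c` unchanged; so the long multiplication with carry `c` computes `A * ds + c`. -/
theorem f14_eq_mul_ofDigits_add (A : ℕ) (ds : List ℕ) (c : ℕ) :
    f14 A ds c = A * Nat.ofDigits 10 ds + c := by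
  induction ds generalizing c with
  | nil => simp [f14, Nat.ofDigits]
  | cons d ds ih =>
    have hcarry := Nat.mod_add_div (A * d + c) 10
    rw [f14, ih, Nat.ofDigits_cons]
    linear_combination hcarry

theorem stmt14 (A : ℕ) (ds : List ℕ) :
    ∑ j ∈ Finset.range ds.length, (A * ds.getD j 0) * 10 ^ j = f14 A ds 0 := by
  rw [f14_eq_mul_ofDigits_add, add_zero, Nat.ofDigits_eq_sum_range_getD, Finset.mul_sum]
  simp only [Nat.cast_id, mul_assoc]
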